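/- arXiv:2211.02743 — 9 statements merged into one kernel-verified Lean document; each statement's English description precedes it below -/
import Mathlib

section
/- Let Φ denote the standard normal CDF. Fix μ > 0, σ₁ > 0, σ₂ > 0, ρ ∈ (0,1), and c ∈ [0,1). Then Φ(-cμ/(ρσ₂)) < Φ(-(1-c)μ/(σ₁+ρσ₂)) if and only if c > ρσ₂/(σ₁ + 2ρσ₂). (Equivalently: with equal weights w₁ = w₂ = 1/2, two projects with means μ₁ = -μ and μ₂ = cμ, standard deviations σ₁, σ₂ and correlation ρ, discovering project 1 yields a higher principal payoff than no discovery exactly when c exceeds the constant cutoff c* = ρσ₂/(σ₁ + 2ρσ₂).) -/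
open MeasureTheory ProbabilityTheory Filter

/-- The standard normal cumulative distribution function. -/
noncomputable def Phi (x : ℝ) : ℝ := cdf (gaussianReal 0 1) x

lemma Phi_strictMono : StrictMono Phi := by
  intro a b hab
  have h1 : (1 : NNReal) ≠ 0 := one_ne_zero
  have hpos : 0 < gaussianReal 0 1 (Set.Ioc a b) := by
    rw [gaussianReal_apply 0 h1 (Set.Ioc a b),
      lintegral_pos_iff_support (measurable_gaussianPDF 0 1)]
    have hsupp : Function.support (gaussianPDF 0 1) = Set.univ := by
      ext x
      simp only [Function.mem_support, Set.mem_univ, iff_true, gaussianPDF, ne_eq,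
        ENNReal.ofReal_eq_zero, not_le]
      exact gaussianPDFReal_pos 0 1 x h1
    rw [hsupp, Measure.restrict_apply_univ]
    simp [Real.volume_Ioc, hab]
  have hmeas : gaussianReal 0 1 (Set.Iic b)
      = gaussianReal 0 1 (Set.Iic a) + gaussianReal 0 1 (Set.Ioc a b) := by
    rw [← measure_union (Set.Iic_disjoint_Ioc le_rfl) measurableSet_Ioc,
      Set.Iic_union_Ioc_eq_Iic hab.le]
  have hfin : gaussianReal 0 1 (Set.Iic b) ≠ ⊤ := measure_ne_top _ _
  simp only [Phi, cdf_eq_real, measureReal_def]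
  rw [ENNReal.toReal_lt_toReal (measure_ne_top _ _) hfin, hmeas]
  exact ENNReal.lt_add_right (by rw [hmeas] at hfin; exact fun h => hfin (by simp [h]))
    hpos.ne'

/-- With equal weights, discovering project 1 beats no discovery iff
`c` exceeds the constant cutoff `c* = ρσ₂/(σ₁ + 2ρσ₂)`. -/
theorem trial_balloon_equal_weights_cutoff
    (μ σ₁ σ₂ ρ c : ℝ) (hμ : 0 < μ) (hσ₁ : 0 < σ₁) (hσ₂ : 0 < σ₂)
    (hρ : ρ ∈ Set.Ioo (0 : ℝ) 1) (hc : c ∈ Set.Ico (0 : ℝ) 1) :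
    Phi (-c * μ / (ρ * σ₂)) < Phi (-(1 - c) * μ / (σ₁ + ρ * σ₂)) ↔
      c > ρ * σ₂ / (σ₁ + 2 * ρ * σ₂) := by
  obtain ⟨hρ0, hρ1⟩ := hρ
  have hd1 : 0 < ρ * σ₂ := mul_pos hρ0 hσ₂
  have hd2 : 0 < σ₁ + ρ * σ₂ := by linarith
  have hd3 : 0 < σ₁ + 2 * ρ * σ₂ := by linarith
  rw [Phi_strictMono.lt_iff_lt, div_lt_div_iff₀ hd1 hd2, gt_iff_lt, div_lt_iff₀ hd3]
  constructor
  · intro h; nlinarith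
  · intro h; nlinarith
end

section
/- Let Φ denote the standard normal CDF. Fix μ > 0, c ∈ [0,1), ρ ∈ (0,1), σ₁ ≥ σ₂ > 0, and weights w₁, w₂ ≥ 0 with w₁ + w₂ = 1. Then w₁·Φ((1-c)μ/(σ₁+ρσ₂)) + w₂·Φ(-cμ/(ρσ₂)) ≤ w₁·Φ((1-c)μ/(σ₂+ρσ₁)) + w₂·Φ(-cμ/σ₂); equivalently, the payoff Π¹ = 1 - w₁Φ((1-c)μ/(σ₁+ρσ₂)) - w₂Φ(-cμ/(ρσ₂)) from discovering the trial balloon (project 1) is at least the payoff Π² = 1 - w₁Φ((1-c)μ/(σ₂+ρσ₁)) - w₂Φ(-cμ/σ₂) from discovering the consensus project (project 2). -/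
open MeasureTheory ProbabilityTheory Filter

lemma Phi_mono : Monotone Phi := (cdf (gaussianReal 0 1)).mono

/-- When `σ₁ ≥ σ₂` (project 1 is a trial balloon), discovering project 1 is
always weakly better than discovering project 2. -/
theorem trial_balloon_beats_consensus
    (μ σ₁ σ₂ ρ c w₁ w₂ : ℝ) (hμ : 0 < μ) (hσ₂ : 0 < σ₂) (hσ : σ₂ ≤ σ₁)
    (hρ : ρ ∈ Set.Ioo (0 : ℝ) 1) (hc : c ∈ Set.Ico (0 : ℝ) 1)
    (hw₁ : 0 ≤ w₁) (hw₂ : 0 ≤ w₂) (hw : w₁ + w₂ = 1) :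
    w₁ * Phi ((1 - c) * μ / (σ₁ + ρ * σ₂)) + w₂ * Phi (-c * μ / (ρ * σ₂)) ≤
      w₁ * Phi ((1 - c) * μ / (σ₂ + ρ * σ₁)) + w₂ * Phi (-c * μ / σ₂) := by
  obtain ⟨hρ0, hρ1⟩ := hρ
  obtain ⟨hc0, hc1⟩ := hc
  have hσ₁ : 0 < σ₁ := lt_of_lt_of_le hσ₂ hσ
  have h1 : (1 - c) * μ / (σ₁ + ρ * σ₂) ≤ (1 - c) * μ / (σ₂ + ρ * σ₁) := by
    apply div_le_div_of_nonneg_left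
    · nlinarith
    · positivity
    · nlinarith
  have h2 : -c * μ / (ρ * σ₂) ≤ -c * μ / σ₂ := by
    rcases eq_or_lt_of_le hc0 with h | h
    · simp [← h]
    · rw [div_le_div_iff₀ (by positivity) hσ₂]
      nlinarith [mul_pos (mul_pos (mul_pos h hμ) hσ₂) (sub_pos.mpr hρ1)]
  gcongr <;> exact Phi_mono (by assumption)
end

section
/- Let Φ denote the standard normal CDF. Fix μ > 0, σ₁ > 0, σ₂ > 0, ρ ∈ (0,1), and w₁ ∈ (0,1). If (1-w₁)/(2w₁) < Φ(-μ/(σ₁+ρσ₂)), then for every c ∈ [0,1): ((1-w₁)/w₁)·Φ(-cμ/(ρσ₂)) < Φ(-(1-c)μ/(σ₁+ρσ₂)); that is, discovering project 1 is strictly better than no discovery for all c ∈ [0,1). -/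
open MeasureTheory ProbabilityTheory Filter

lemma gauss_neg_map : (gaussianReal 0 1).map (fun x => (-1 : ℝ) * x) = gaussianReal 0 1 := by
  rw [gaussianReal_map_const_mul (-1 : ℝ)]
  norm_num

lemma Phi_zero : Phi 0 = 1 / 2 := by
  have hmap := gauss_neg_map
  have h1 : (gaussianReal 0 1) (Set.Iic 0) = (gaussianReal 0 1) (Set.Ici 0) := by
    conv_lhs => rw [← hmap]
    rw [Measure.map_apply (measurable_const_mul (-1)) measurableSet_Iic]
    congr 1
    ext x
    simp [neg_le]
  have hzero : (gaussianReal 0 1) {(0:ℝ)} = 0 := by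
    refine gaussianReal_absolutelyContinuous 0 one_ne_zero ?_
    simp
  have h2 : (gaussianReal 0 1) (Set.Ici 0) = (gaussianReal 0 1) {(0:ℝ)} + (gaussianReal 0 1) (Set.Ioi 0) := by
    rw [← measure_union (by simp [Set.disjoint_left]) measurableSet_Ioi]
    congr 1
    ext x; simp [le_iff_lt_or_eq, or_comm]
  have h3 : (gaussianReal 0 1) (Set.Iic 0) + (gaussianReal 0 1) (Set.Ioi 0) = 1 := by
    rw [← measure_union (Set.Iic_disjoint_Ioi le_rfl) measurableSet_Ioi]
    simp [Set.Iic_union_Ioi]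
  have h4 : (gaussianReal 0 1) (Set.Iic 0) + (gaussianReal 0 1) (Set.Iic 0) = 1 := by
    rw [h1, h2, hzero, zero_add] at *
    exact h3
  have : Phi 0 = ((gaussianReal 0 1) (Set.Iic 0)).toReal := cdf_eq_real (μ := gaussianReal 0 1) 0
  rw [this]
  have hne : (gaussianReal 0 1) (Set.Iic 0) ≠ ⊤ := measure_ne_top _ _
  have := congrArg ENNReal.toReal h4
  rw [ENNReal.toReal_add hne hne] at this
  simp at this
  linarith

lemma Phi_le_half {x : ℝ} (hx : x ≤ 0) : Phi x ≤ 1 / 2 := Phi_zero ▸ Phi_mono hx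

/-- If `(1-w₁)/(2w₁) < Φ(-μ/(σ₁+ρσ₂))`, then discovering project 1 strictly beats
no discovery for all `c ∈ [0,1)`. -/
theorem discovery_dominates_for_all_c
    (μ σ₁ σ₂ ρ w₁ : ℝ) (hμ : 0 < μ) (hσ₁ : 0 < σ₁) (hσ₂ : 0 < σ₂)
    (hρ : ρ ∈ Set.Ioo (0 : ℝ) 1) (hw₁ : w₁ ∈ Set.Ioo (0 : ℝ) 1)
    (h : (1 - w₁) / (2 * w₁) < Phi (-μ / (σ₁ + ρ * σ₂))) :
    ∀ c ∈ Set.Ico (0 : ℝ) 1,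
      (1 - w₁) / w₁ * Phi (-c * μ / (ρ * σ₂)) < Phi (-(1 - c) * μ / (σ₁ + ρ * σ₂)) := by
  intro c hc
  obtain ⟨hc0, hc1⟩ := hc
  obtain ⟨hρ0, hρ1⟩ := hρ
  obtain ⟨hw0, hw1⟩ := hw₁
  have hden : 0 < σ₁ + ρ * σ₂ := by positivity
  have harg : -c * μ / (ρ * σ₂) ≤ 0 :=
    div_nonpos_of_nonpos_of_nonneg (by nlinarith [mul_nonneg hc0 hμ.le]) (by positivity)
  have h1 : (1 - w₁) / w₁ * Phi (-c * μ / (ρ * σ₂)) ≤ (1 - w₁) / (2 * w₁) := by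
    have hP := Phi_le_half harg
    have hw : 0 < (1 - w₁) / w₁ := div_pos (by linarith) hw0
    calc (1 - w₁) / w₁ * Phi (-c * μ / (ρ * σ₂)) ≤ (1 - w₁) / w₁ * (1/2) :=
          mul_le_mul_of_nonneg_left hP hw.le
      _ = (1 - w₁) / (2 * w₁) := by ring
  have h2 : Phi (-μ / (σ₁ + ρ * σ₂)) ≤ Phi (-(1 - c) * μ / (σ₁ + ρ * σ₂)) := by
    apply Phi_mono
    rw [div_le_div_iff₀ hden hden]
    nlinarith [mul_nonneg (mul_nonneg hc0 hμ.le) hden.le]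
  linarith
end

section
/- Let Φ denote the standard normal CDF. Fix σ₁ > 0, σ₂ > 0, ρ ∈ (0,1), and set c* = ρσ₂/(σ₁ + 2ρσ₂). For c ∈ (0,1): (i) if c > c*, then Φ(-cμ/(ρσ₂))/Φ(-(1-c)μ/(σ₁+ρσ₂)) → 0 as μ → ∞; (ii) if c < c*, then Φ(-cμ/(ρσ₂))/Φ(-(1-c)μ/(σ₁+ρσ₂)) → ∞ as μ → ∞. -/
open MeasureTheory ProbabilityTheory Filter

section Aux
open Real Set

lemma pdf01 (t : ℝ) : gaussianPDFReal 0 1 t = (Real.sqrt (2 * π))⁻¹ * Real.exp (-t ^ 2 / 2) := by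
  simp [gaussianPDFReal]

lemma Phi_eq (x : ℝ) : Phi x = ∫ t in Iic x, gaussianPDFReal 0 1 t := by
  rw [Phi, cdf_eq_real, measureReal_def, gaussianReal_apply_eq_integral 0 one_ne_zero, ENNReal.toReal_ofReal]
  exact setIntegral_nonneg measurableSet_Iic fun t _ => gaussianPDFReal_nonneg 0 1 t

lemma Phi_upper {x : ℝ} (hx : 0 < x) :
    Phi (-x) ≤ (Real.sqrt (2 * π))⁻¹ * Real.exp (-x ^ 2 / 2) / x := by
  rw [Phi_eq]
  have hint : IntegrableOn (fun t => ((Real.sqrt (2 * π))⁻¹ * Real.exp (x ^ 2 / 2)) * Real.exp (x * t)) (Iic (-x)) :=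
    (integrableOn_exp_mul_Iic hx (-x)).const_mul _
  have hle : ∀ t ∈ Iic (-x), gaussianPDFReal 0 1 t ≤
      ((Real.sqrt (2 * π))⁻¹ * Real.exp (x ^ 2 / 2)) * Real.exp (x * t) := by
    intro t _
    rw [pdf01, mul_assoc, ← Real.exp_add]
    have h : -t ^ 2 / 2 ≤ x ^ 2 / 2 + x * t := by nlinarith [sq_nonneg (t + x)]
    exact mul_le_mul_of_nonneg_left (Real.exp_le_exp.2 h) (by positivity)
  calc (∫ t in Iic (-x), gaussianPDFReal 0 1 t)
      ≤ ∫ t in Iic (-x), ((Real.sqrt (2 * π))⁻¹ * Real.exp (x ^ 2 / 2)) * Real.exp (x * t) :=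
        setIntegral_mono_on (integrable_gaussianPDFReal 0 1).restrict hint measurableSet_Iic hle
    _ = ((Real.sqrt (2 * π))⁻¹ * Real.exp (x ^ 2 / 2)) * (Real.exp (x * (-x)) / x) := by
        rw [integral_const_mul, integral_exp_mul_Iic hx]
    _ = (Real.sqrt (2 * π))⁻¹ * Real.exp (-x ^ 2 / 2) / x := by
        have h : Real.exp (x ^ 2 / 2) * (Real.exp (x * (-x)) / x) = Real.exp (-x ^ 2 / 2) / x := by
          rw [← mul_div_assoc, ← Real.exp_add]
          congr 2
          ring
        rw [mul_assoc, h, ← mul_div_assoc]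

lemma Phi_lower {x : ℝ} (hx : 0 ≤ x) :
    (Real.sqrt (2 * π))⁻¹ * Real.exp (-(x + 1) ^ 2 / 2) ≤ Phi (-x) := by
  rw [Phi_eq]
  have hsub : Icc (-x - 1) (-x) ⊆ Iic (-x) := fun t ht => ht.2
  have h1 : (∫ t in Icc (-x - 1) (-x), gaussianPDFReal 0 1 t) ≤
      ∫ t in Iic (-x), gaussianPDFReal 0 1 t := by
    apply setIntegral_mono_set (integrable_gaussianPDFReal 0 1).restrict
      (Filter.Eventually.of_forall fun t => gaussianPDFReal_nonneg 0 1 t)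
      (Filter.Eventually.of_forall hsub)
  refine le_trans ?_ h1
  have h2 : ∀ t ∈ Icc (-x - 1) (-x),
      (Real.sqrt (2 * π))⁻¹ * Real.exp (-(x + 1) ^ 2 / 2) ≤ gaussianPDFReal 0 1 t := by
    intro t ht
    rw [pdf01]
    have h : -(x + 1) ^ 2 / 2 ≤ -t ^ 2 / 2 := by nlinarith [ht.1, ht.2]
    exact mul_le_mul_of_nonneg_left (Real.exp_le_exp.2 h) (by positivity)
  have := setIntegral_ge_of_const_le (measurableSet_Icc) (by simp [Real.volume_Icc] : volume (Icc (-x - 1) (-x)) ≠ ⊤) h2 (integrable_gaussianPDFReal 0 1).restrict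
  calc (Real.sqrt (2 * π))⁻¹ * Real.exp (-(x + 1) ^ 2 / 2)
      = (Real.sqrt (2 * π))⁻¹ * Real.exp (-(x + 1) ^ 2 / 2) * (volume (Icc (-x - 1) (-x))).toReal := by
        rw [Real.volume_Icc]
        norm_num
    _ ≤ _ := by rw [mul_comm _ ((volume (Icc (-x - 1) (-x))).toReal), ← smul_eq_mul]; exact this

lemma Phi_pos {x : ℝ} (hx : 0 ≤ x) : 0 < Phi (-x) :=
  lt_of_lt_of_le (by positivity) (Phi_lower hx)

lemma key_zero {a b : ℝ} (hb : 0 < b) (hab : b < a) :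
    Tendsto (fun μ : ℝ => Phi (-(a * μ)) / Phi (-(b * μ))) atTop (nhds 0) := by
  have ha : 0 < a := hb.trans hab
  have hC : (0 : ℝ) < (Real.sqrt (2 * π))⁻¹ := by positivity
  have hg : Tendsto (fun μ : ℝ =>
      Real.exp (((b * μ + 1) ^ 2 - (a * μ) ^ 2) / 2) * (a * μ)⁻¹) atTop (nhds 0) := by
    have hq : Tendsto (fun μ : ℝ => ((b * μ + 1) ^ 2 - (a * μ) ^ 2) / 2) atTop atBot := by
      have h1 : Tendsto (fun μ : ℝ => ((b ^ 2 - a ^ 2) / 2) * μ + b) atTop atBot := by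
        apply tendsto_atBot_add_const_right
        apply Tendsto.const_mul_atTop_of_neg (by nlinarith : (b ^ 2 - a ^ 2) / 2 < 0) tendsto_id
      have h2 : Tendsto (fun μ : ℝ => μ * (((b ^ 2 - a ^ 2) / 2) * μ + b)) atTop atBot :=
        Tendsto.atTop_mul_atBot₀ tendsto_id h1
      have h3 := tendsto_atBot_add_const_right atTop ((1 : ℝ) / 2) h2
      exact h3.congr fun μ => by ring
    have he := Real.tendsto_exp_atBot.comp hq
    have hinv : Tendsto (fun μ : ℝ => (a * μ)⁻¹) atTop (nhds 0) :=
      Tendsto.inv_tendsto_atTop ((tendsto_const_mul_atTop_of_pos ha).2 tendsto_id)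
    simpa using he.mul hinv
  apply squeeze_zero' ?_ ?_ hg
  · filter_upwards with μ
    exact div_nonneg (cdf_nonneg _ _) (cdf_nonneg _ _)
  · filter_upwards [eventually_ge_atTop (1 : ℝ)] with μ hμ
    have hμ0 : (0 : ℝ) < μ := lt_of_lt_of_le one_pos hμ
    have haμ : 0 < a * μ := mul_pos ha hμ0
    have hbμ : 0 ≤ b * μ := le_of_lt (mul_pos hb hμ0)
    have hnum := Phi_upper haμ
    have hden := Phi_lower hbμ
    have hdpos : (0 : ℝ) < (Real.sqrt (2 * π))⁻¹ * Real.exp (-(b * μ + 1) ^ 2 / 2) := by positivity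
    have hstep : Phi (-(a * μ)) / Phi (-(b * μ)) ≤
        ((Real.sqrt (2 * π))⁻¹ * Real.exp (-(a * μ) ^ 2 / 2) / (a * μ)) /
        ((Real.sqrt (2 * π))⁻¹ * Real.exp (-(b * μ + 1) ^ 2 / 2)) :=
      div_le_div₀ (by positivity) hnum hdpos hden
    refine hstep.trans (le_of_eq ?_)
    have hE : Real.exp (-(a * μ) ^ 2 / 2) / Real.exp (-(b * μ + 1) ^ 2 / 2)
        = Real.exp (((b * μ + 1) ^ 2 - (a * μ) ^ 2) / 2) := by
      rw [← Real.exp_sub]; congr 1; ring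
    have hA : (a * μ) ≠ 0 := haμ.ne'
    have hC' : (Real.sqrt (2 * π))⁻¹ ≠ 0 := hC.ne'
    have hE2 : Real.exp (-(b * μ + 1) ^ 2 / 2) ≠ 0 := (Real.exp_pos _).ne'
    rw [← hE]
    field_simp
  

lemma key_top {a b : ℝ} (ha : 0 < a) (hab : a < b) :
    Tendsto (fun μ : ℝ => Phi (-(a * μ)) / Phi (-(b * μ))) atTop atTop := by
  have hb : 0 < b := ha.trans hab
  have hC : (0 : ℝ) < (Real.sqrt (2 * π))⁻¹ := by positivity
  have hg : Tendsto (fun μ : ℝ =>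
      (b * μ) * Real.exp (((b * μ) ^ 2 - (a * μ + 1) ^ 2) / 2)) atTop atTop := by
    have hq : Tendsto (fun μ : ℝ => ((b * μ) ^ 2 - (a * μ + 1) ^ 2) / 2) atTop atTop := by
      have h1 : Tendsto (fun μ : ℝ => ((b ^ 2 - a ^ 2) / 2) * μ + (-a)) atTop atTop := by
        apply tendsto_atTop_add_const_right
        exact (tendsto_const_mul_atTop_of_pos (by nlinarith : (0:ℝ) < (b ^ 2 - a ^ 2) / 2)).2
          tendsto_id
      have h2 : Tendsto (fun μ : ℝ => μ * (((b ^ 2 - a ^ 2) / 2) * μ + (-a))) atTop atTop :=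
        Tendsto.atTop_mul_atTop₀ tendsto_id h1
      have h3 := tendsto_atTop_add_const_right atTop (-(1 : ℝ) / 2) h2
      exact h3.congr fun μ => by ring
    exact Tendsto.atTop_mul_atTop₀ ((tendsto_const_mul_atTop_of_pos hb).2 tendsto_id)
      (Real.tendsto_exp_atTop.comp hq)
  apply tendsto_atTop_mono' atTop ?_ hg
  filter_upwards [eventually_ge_atTop (1 : ℝ)] with μ hμ
  have hμ0 : (0 : ℝ) < μ := lt_of_lt_of_le one_pos hμ
  have hbμ : 0 < b * μ := mul_pos hb hμ0
  have haμ : 0 ≤ a * μ := le_of_lt (mul_pos ha hμ0)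
  have hnum := Phi_lower haμ
  have hden := Phi_upper hbμ
  have hdpos : 0 < Phi (-(b * μ)) := Phi_pos (le_of_lt hbμ)
  have hstep : ((Real.sqrt (2 * π))⁻¹ * Real.exp (-(a * μ + 1) ^ 2 / 2)) /
      ((Real.sqrt (2 * π))⁻¹ * Real.exp (-(b * μ) ^ 2 / 2) / (b * μ)) ≤
      Phi (-(a * μ)) / Phi (-(b * μ)) :=
    div_le_div₀ (cdf_nonneg _ _) hnum hdpos hden
  refine le_trans (le_of_eq ?_) hstep
  have hE : Real.exp (-(a * μ + 1) ^ 2 / 2) / Real.exp (-(b * μ) ^ 2 / 2)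
      = Real.exp (((b * μ) ^ 2 - (a * μ + 1) ^ 2) / 2) := by
    rw [← Real.exp_sub]; congr 1; ring
  have hB : (b * μ) ≠ 0 := hbμ.ne'
  have hC' : (Real.sqrt (2 * π))⁻¹ ≠ 0 := hC.ne'
  have hE2 : Real.exp (-(b * μ) ^ 2 / 2) ≠ 0 := (Real.exp_pos _).ne'
  rw [← hE]
  field_simp

end Aux


/-- Limit behavior of the ratio of spoiling to improvement probabilities:
it tends to `0` when `c > c*` and to `∞` when `c < c*`, where
`c* = ρσ₂/(σ₁ + 2ρσ₂)`. -/
theorem spoiling_improvement_ratio_limits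
    (σ₁ σ₂ ρ c : ℝ) (hσ₁ : 0 < σ₁) (hσ₂ : 0 < σ₂)
    (hρ : ρ ∈ Set.Ioo (0 : ℝ) 1) (hc : c ∈ Set.Ioo (0 : ℝ) 1) :
    (c > ρ * σ₂ / (σ₁ + 2 * ρ * σ₂) →
      Tendsto (fun μ : ℝ => Phi (-c * μ / (ρ * σ₂)) / Phi (-(1 - c) * μ / (σ₁ + ρ * σ₂)))
        atTop (nhds 0)) ∧
    (c < ρ * σ₂ / (σ₁ + 2 * ρ * σ₂) →
      Tendsto (fun μ : ℝ => Phi (-c * μ / (ρ * σ₂)) / Phi (-(1 - c) * μ / (σ₁ + ρ * σ₂)))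
        atTop atTop) := by
  obtain ⟨hρ0, hρ1⟩ := hρ
  obtain ⟨hc0, hc1⟩ := hc
  have hd1 : 0 < ρ * σ₂ := mul_pos hρ0 hσ₂
  have hd2 : 0 < σ₁ + ρ * σ₂ := by linarith
  have hd3 : 0 < σ₁ + 2 * ρ * σ₂ := by linarith
  set a : ℝ := c / (ρ * σ₂) with ha_def
  set b : ℝ := (1 - c) / (σ₁ + ρ * σ₂) with hb_def
  have ha : 0 < a := div_pos hc0 hd1
  have hb : 0 < b := div_pos (by linarith) hd2
  have hfun : (fun μ : ℝ => Phi (-c * μ / (ρ * σ₂)) / Phi (-(1 - c) * μ / (σ₁ + ρ * σ₂)))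
      = fun μ : ℝ => Phi (-(a * μ)) / Phi (-(b * μ)) := by
    funext μ
    rw [ha_def, hb_def]
    congr 2 <;> field_simp <;> ring
  constructor
  · intro h
    have hab : b < a := by
      rw [ha_def, hb_def, div_lt_div_iff₀ hd2 hd1]
      rw [gt_iff_lt, div_lt_iff₀ hd3] at h
      nlinarith
    rw [hfun]
    exact key_zero hb hab
  · intro h
    have hab : a < b := by
      rw [ha_def, hb_def, div_lt_div_iff₀ hd1 hd2]
      rw [lt_div_iff₀ hd3] at h
      nlinarith
    rw [hfun]
    exact key_top ha hab
end

section
/- Let Φ denote the standard normal CDF. Fix μ₁, μ₂ ∈ ℝ with μ₁ + μ₂ < 0, ρ ∈ (0,1), and σ₁, σ₂ > 0. Then Φ((μ₁+μ₂)/√(σ₁² + σ₂² + 2ρσ₁σ₂)) > Φ((μ₁+μ₂)/(σ₁+ρσ₂)) and Φ((μ₁+μ₂)/√(σ₁² + σ₂² + 2ρσ₁σ₂)) > Φ((μ₁+μ₂)/(σ₂+ρσ₁)). That is, the probability of obtaining the grand bundle under full discovery of both projects strictly exceeds the probability under discovery of either single project. -/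
open MeasureTheory ProbabilityTheory Filter

lemma gaussianReal_Ioc_pos {x y : ℝ} (hxy : x < y) :
    0 < gaussianReal 0 1 (Set.Ioc x y) := by
  rw [gaussianReal_apply 0 one_ne_zero]
  rw [setLIntegral_pos_iff (measurable_gaussianPDF 0 1)]
  have hsupp : Function.support (gaussianPDF 0 1) = Set.univ := by
    ext z
    simp [Function.mem_support, (gaussianPDF_pos 0 one_ne_zero z).ne']
  rw [hsupp, Set.univ_inter, Real.volume_Ioc]
  simpa using sub_pos.mpr hxy

/-- The grand-bundle probability under full discovery strictly exceeds that under
discovery of either single project. -/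
theorem full_discovery_beats_single_for_bundle
    (μ₁ μ₂ σ₁ σ₂ ρ : ℝ) (hsum : μ₁ + μ₂ < 0) (hρ : ρ ∈ Set.Ioo (0 : ℝ) 1)
    (hσ₁ : 0 < σ₁) (hσ₂ : 0 < σ₂) :
    Phi ((μ₁ + μ₂) / Real.sqrt (σ₁ ^ 2 + σ₂ ^ 2 + 2 * ρ * σ₁ * σ₂)) >
        Phi ((μ₁ + μ₂) / (σ₁ + ρ * σ₂)) ∧
    Phi ((μ₁ + μ₂) / Real.sqrt (σ₁ ^ 2 + σ₂ ^ 2 + 2 * ρ * σ₁ * σ₂)) >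
        Phi ((μ₁ + μ₂) / (σ₂ + ρ * σ₁)) := by
  obtain ⟨hρ0, hρ1⟩ := hρ
  set m := μ₁ + μ₂ with hm
  set s := Real.sqrt (σ₁ ^ 2 + σ₂ ^ 2 + 2 * ρ * σ₁ * σ₂) with hs
  have hq : (0:ℝ) < σ₁ ^ 2 + σ₂ ^ 2 + 2 * ρ * σ₁ * σ₂ := by positivity
  have hs2 : s ^ 2 = σ₁ ^ 2 + σ₂ ^ 2 + 2 * ρ * σ₁ * σ₂ := Real.sq_sqrt hq.le
  have hspos : 0 < s := Real.sqrt_pos.mpr hq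
  have key : ∀ d : ℝ, 0 < d → d < s → Phi (m / d) < Phi (m / s) := by
    intro d hd hds
    apply Phi_strictMono
    rw [div_lt_div_iff₀ hd hspos]
    exact mul_lt_mul_of_neg_left hds hsum
  have hρ2 : ρ ^ 2 < 1 := by nlinarith
  constructor
  · refine key (σ₁ + ρ * σ₂) (by positivity) ?_
    have h1 : (σ₁ + ρ * σ₂) ^ 2 < s ^ 2 := by nlinarith [mul_pos hσ₂ hσ₂]
    exact lt_of_pow_lt_pow_left₀ 2 hspos.le h1
  · refine key (σ₂ + ρ * σ₁) (by positivity) ?_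
    have h1 : (σ₂ + ρ * σ₁) ^ 2 < s ^ 2 := by nlinarith [mul_pos hσ₁ hσ₁]
    exact lt_of_pow_lt_pow_left₀ 2 hspos.le h1
end

section
/- Let Φ denote the standard normal CDF. Fix μ₁ < μ₂ < 0, σ₁, σ₂ > 0, and ρ ∈ (0,1). If σ₁/μ₁ < σ₂/μ₂ (equivalently μ₁/σ₁ > μ₂/σ₂), then max(Φ(μ₁/σ₁), Φ(μ₂/(ρσ₂))) ≥ max(Φ(μ₂/σ₂), Φ(μ₁/(ρσ₁))). That is, for a principal who maximizes the probability of having at least one project approved, discovering the project with the smaller ratio σᵢ/μᵢ is weakly better than discovering the other project. -/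
open MeasureTheory ProbabilityTheory Filter

/-- For substitutable projects, discovering the project with the smaller ratio
`σᵢ/μᵢ` is weakly better for getting at least one project approved. -/
theorem substitutes_discovery_comparison
    (μ₁ μ₂ σ₁ σ₂ ρ : ℝ) (h1 : μ₁ < μ₂) (h2 : μ₂ < 0)
    (hσ₁ : 0 < σ₁) (hσ₂ : 0 < σ₂) (hρ : ρ ∈ Set.Ioo (0 : ℝ) 1)
    (hratio : σ₁ / μ₁ < σ₂ / μ₂) :
    max (Phi (μ₁ / σ₁)) (Phi (μ₂ / (ρ * σ₂))) ≥
      max (Phi (μ₂ / σ₂)) (Phi (μ₁ / (ρ * σ₁))) := by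
  obtain ⟨hρ0, hρ1⟩ := hρ
  have hμ₁ : μ₁ < 0 := h1.trans h2
  have h21 : μ₂ / σ₂ ≤ μ₁ / σ₁ := by
    have hneg₂ : σ₂ / μ₂ < 0 := div_neg_of_pos_of_neg hσ₂ h2
    have hneg₁ : σ₁ / μ₁ < 0 := div_neg_of_pos_of_neg hσ₁ hμ₁
    have := one_div_lt_one_div_of_neg hneg₂ hneg₁ |>.mpr hratio
    rw [one_div_div, one_div_div] at this
    exact this.le
  have hr1 : μ₁ / (ρ * σ₁) ≤ μ₁ / σ₁ := by
    rw [div_le_div_iff₀ (by positivity) hσ₁]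
    nlinarith [mul_neg_of_neg_of_pos hμ₁ (mul_pos hσ₁ (sub_pos.mpr hρ1))]
  have key : max (Phi (μ₂ / σ₂)) (Phi (μ₁ / (ρ * σ₁))) ≤ Phi (μ₁ / σ₁) :=
    max_le (Phi_mono h21) (Phi_mono hr1)
  exact le_max_of_le_left key
end

section
/- Let Φ denote the standard normal CDF and let f₁ be the probability density of the normal distribution with mean μ₁ and variance 1. Fix μ₁ < 0, μ₂ < 0, σ₂ > 0, and ρ ∈ (0,1) with μ₂ > ρσ₂μ₁. Define λ(v) = -(μ₂ + ρσ₂(v - μ₁))/(σ₂√(1-ρ²)) and v* = (ρσ₂μ₁ - μ₂)/(ρσ₂), so that v* < 0. Then ∫_{-∞}^{v*} (1 - Φ(λ(x))) f₁(x) dx > ∫_{v*}^{0} Φ(λ(x)) f₁(x) dx. -/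
open MeasureTheory ProbabilityTheory Filter

lemma Phi_eq_integral (x : ℝ) :
    Phi x = ∫ t in Set.Iic x, gaussianPDFReal 0 1 t := by
  rw [Phi, cdf_eq_real, measureReal_def, gaussianReal_apply_eq_integral _ one_ne_zero,
    ENNReal.toReal_ofReal]
  exact integral_nonneg fun t => gaussianPDFReal_nonneg 0 1 t

lemma Phi_nonneg (x : ℝ) : 0 ≤ Phi x := cdf_nonneg _ x

lemma Phi_le_one (x : ℝ) : Phi x ≤ 1 := cdf_le_one _ x

lemma gaussianPDFReal_zero_one_neg (t : ℝ) :
    gaussianPDFReal 0 1 (-t) = gaussianPDFReal 0 1 t := by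
  unfold gaussianPDFReal
  ring_nf

lemma Phi_neg (x : ℝ) : Phi (-x) = 1 - Phi x := by
  have h0 : (∫ t, gaussianPDFReal 0 1 t) = 1 := integral_gaussianPDFReal_eq_one 0 one_ne_zero
  have hsplit : (∫ t in Set.Iic x, gaussianPDFReal 0 1 t)
      + ∫ t in Set.Ioi x, gaussianPDFReal 0 1 t = 1 := by
    rw [← setIntegral_union (Set.Iic_disjoint_Ioi le_rfl) measurableSet_Ioi
      (integrable_gaussianPDFReal 0 1).integrableOn
      (integrable_gaussianPDFReal 0 1).integrableOn, Set.Iic_union_Ioi,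
      setIntegral_univ, h0]
  have hneg : (∫ t in Set.Iic (-x), gaussianPDFReal 0 1 t)
      = ∫ t in Set.Ioi x, gaussianPDFReal 0 1 t := by
    calc (∫ t in Set.Iic (-x), gaussianPDFReal 0 1 t)
        = ∫ t in Set.Iic (-x), gaussianPDFReal 0 1 (-t) := by
          simp only [gaussianPDFReal_zero_one_neg]
      _ = ∫ t in Set.Ioi (-(-x)), gaussianPDFReal 0 1 t :=
          integral_comp_neg_Iic (-x) _
      _ = ∫ t in Set.Ioi x, gaussianPDFReal 0 1 t := by rw [neg_neg]
  rw [Phi_eq_integral, Phi_eq_integral, hneg]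
  linarith

lemma Phi_lt_one (x : ℝ) : Phi x < 1 := by
  have h1 : (0 : ℝ) < ∫ t in Set.Ioi x, gaussianPDFReal 0 1 t := by
    rw [setIntegral_pos_iff_support_of_nonneg_ae
      (ae_of_all _ fun t => gaussianPDFReal_nonneg 0 1 t)
      (integrable_gaussianPDFReal 0 1).integrableOn]
    have : Function.support (gaussianPDFReal 0 1) ∩ Set.Ioi x = Set.Ioi x := by
      rw [Set.inter_eq_right]
      intro t _
      exact (gaussianPDFReal_pos 0 1 t one_ne_zero).ne'
    rw [this]
    simp [Real.volume_Ioi]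
  have := Phi_neg x
  have h2 : Phi (-x) = ∫ t in Set.Ioi x, gaussianPDFReal 0 1 t := by
    rw [Phi_eq_integral]
    calc (∫ t in Set.Iic (-x), gaussianPDFReal 0 1 t)
        = ∫ t in Set.Iic (-x), gaussianPDFReal 0 1 (-t) := by
          simp only [gaussianPDFReal_zero_one_neg]
      _ = ∫ t in Set.Ioi (-(-x)), gaussianPDFReal 0 1 t :=
          integral_comp_neg_Iic (-x) _
      _ = ∫ t in Set.Ioi x, gaussianPDFReal 0 1 t := by rw [neg_neg]
  linarith [h2 ▸ this]

set_option maxHeartbeats 2000000 in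
/-- Key integral inequality in the proof of Proposition 3 (Substitutable Projects):
the gain from full discovery below `v*` exceeds the loss on `(v*, 0)`. -/
theorem substitutes_integral_inequality
    (μ₁ μ₂ σ₂ ρ : ℝ) (h1 : μ₁ < 0) (h2 : μ₂ < 0) (hσ₂ : 0 < σ₂)
    (hρ : ρ ∈ Set.Ioo (0 : ℝ) 1) (hcond : μ₂ > ρ * σ₂ * μ₁) :
    (ρ * σ₂ * μ₁ - μ₂) / (ρ * σ₂) < 0 ∧
    (∫ x in Set.Iic ((ρ * σ₂ * μ₁ - μ₂) / (ρ * σ₂)),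
        (1 - Phi (-(μ₂ + ρ * σ₂ * (x - μ₁)) / (σ₂ * Real.sqrt (1 - ρ ^ 2))))
          * gaussianPDFReal μ₁ 1 x) >
      ∫ x in Set.Ioc ((ρ * σ₂ * μ₁ - μ₂) / (ρ * σ₂)) (0 : ℝ),
        Phi (-(μ₂ + ρ * σ₂ * (x - μ₁)) / (σ₂ * Real.sqrt (1 - ρ ^ 2)))
          * gaussianPDFReal μ₁ 1 x := by
  obtain ⟨hρ0, hρ1⟩ := hρ
  have hb : 0 < ρ * σ₂ := mul_pos hρ0 hσ₂
  set c : ℝ := (ρ * σ₂ * μ₁ - μ₂) / (ρ * σ₂) with hc_def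
  have hc : c < 0 := div_neg_of_neg_of_pos (by linarith) hb
  set s : ℝ := σ₂ * Real.sqrt (1 - ρ ^ 2) with hs_def
  have hs : 0 < s := mul_pos hσ₂ (Real.sqrt_pos.mpr (by nlinarith))
  set lam : ℝ → ℝ := fun x => -(μ₂ + ρ * σ₂ * (x - μ₁)) / s with hlam_def
  set g : ℝ → ℝ := gaussianPDFReal μ₁ 1 with hg_def
  have hbc : ρ * σ₂ * c = ρ * σ₂ * μ₁ - μ₂ := by
    rw [hc_def]; field_simp
  -- reflection identity
  have hrefl : ∀ y : ℝ, lam (2 * c - y) = - lam y := by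
    intro y
    rw [hlam_def]
    simp only
    have hnum : -(μ₂ + ρ * σ₂ * (2 * c - y - μ₁)) = μ₂ + ρ * σ₂ * (y - μ₁) := by
      nlinarith [hbc]
    rw [hnum, neg_div, neg_neg]
  have hμc : μ₁ < c := by
    have : ρ * σ₂ * μ₁ < ρ * σ₂ * c := by rw [hbc]; linarith
    exact lt_of_mul_lt_mul_left this hb.le
  -- measurability
  have hlam_meas : Measurable lam := by
    apply Measurable.div_const
    exact (measurable_const.add ((measurable_id.sub_const μ₁).const_mul _)).neg
  have hPhi_meas : Measurable Phi := (monotone_cdf _).measurable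
  have hg_meas : Measurable g := measurable_gaussianPDFReal μ₁ 1
  have hg_int : Integrable g := integrable_gaussianPDFReal μ₁ 1
  have hg_nonneg : ∀ x, 0 ≤ g x := gaussianPDFReal_nonneg μ₁ 1
  have hg_pos : ∀ x, 0 < g x := fun x => gaussianPDFReal_pos μ₁ 1 x one_ne_zero
  -- the reflected gaussian is a gaussian
  have hg_refl : ∀ y : ℝ, g (2 * c - y) = gaussianPDFReal (2 * c - μ₁) 1 y := by
    intro y
    rw [hg_def]
    unfold gaussianPDFReal
    ring_nf
  -- integrable functions
  have hF_int : Integrable (fun x => (1 - Phi (lam x)) * g x) := by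
    refine Integrable.mono' hg_int ?_ (ae_of_all _ fun x => ?_)
    · exact (((measurable_const.sub (hPhi_meas.comp hlam_meas)).mul hg_meas)).aestronglyMeasurable
    · rw [Real.norm_eq_abs, abs_mul, abs_of_nonneg (hg_nonneg x),
        abs_of_nonneg (by linarith [Phi_le_one (lam x)])]
      nlinarith [Phi_nonneg (lam x), hg_nonneg x, Phi_le_one (lam x)]
  have hG_int : Integrable (fun x => Phi (lam x) * g x) := by
    refine Integrable.mono' hg_int ?_ (ae_of_all _ fun x => ?_)
    · exact ((hPhi_meas.comp hlam_meas).mul hg_meas).aestronglyMeasurable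
    · rw [Real.norm_eq_abs, abs_mul, abs_of_nonneg (hg_nonneg x),
        abs_of_nonneg (Phi_nonneg (lam x))]
      nlinarith [Phi_nonneg (lam x), hg_nonneg x, Phi_le_one (lam x)]
  have hGrefl_int : Integrable (fun y => Phi (lam y) * g (2 * c - y)) := by
    refine Integrable.mono' (integrable_gaussianPDFReal (2 * c - μ₁) 1) ?_
      (ae_of_all _ fun y => ?_)
    · refine ((hPhi_meas.comp hlam_meas).mul ?_).aestronglyMeasurable
      exact hg_meas.comp (measurable_const.sub measurable_id)
    · rw [Real.norm_eq_abs, abs_mul, hg_refl y,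
        abs_of_nonneg (gaussianPDFReal_nonneg _ 1 y), abs_of_nonneg (Phi_nonneg (lam y))]
      nlinarith [Phi_nonneg (lam y), Phi_le_one (lam y),
        gaussianPDFReal_nonneg (2 * c - μ₁) 1 y]
  refine ⟨hc, ?_⟩
  -- split the left integral
  have h2c : 2 * c < c := by linarith
  have hsplit : (∫ x in Set.Iic c, (1 - Phi (lam x)) * g x)
      = (∫ x in Set.Iic (2 * c), (1 - Phi (lam x)) * g x)
        + ∫ x in Set.Ioc (2 * c) c, (1 - Phi (lam x)) * g x := by
    rw [← setIntegral_union (Set.Iic_disjoint_Ioc le_rfl) measurableSet_Ioc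
      hF_int.integrableOn hF_int.integrableOn, Set.Iic_union_Ioc_eq_Iic h2c.le]
  -- positivity of the tail
  have htail : 0 < ∫ x in Set.Iic (2 * c), (1 - Phi (lam x)) * g x := by
    rw [setIntegral_pos_iff_support_of_nonneg_ae
      (ae_of_all _ fun x => mul_nonneg (by linarith [Phi_le_one (lam x)]) (hg_nonneg x))
      hF_int.integrableOn]
    have hsupp : Function.support (fun x => (1 - Phi (lam x)) * g x) ∩ Set.Iic (2 * c)
        = Set.Iic (2 * c) := by
      rw [Set.inter_eq_right]
      intro x _
      exact (mul_pos (by linarith [Phi_lt_one (lam x)]) (hg_pos x)).ne'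
    rw [hsupp]
    simp [Real.volume_Iic]
  -- change of variables on the middle piece
  have hcov : (∫ x in Set.Ioc (2 * c) c, (1 - Phi (lam x)) * g x)
      = ∫ y in Set.Ioc c 0, Phi (lam y) * g (2 * c - y) := by
    have h1 : (∫ x in Set.Ioc (2 * c) c, (1 - Phi (lam x)) * g x)
        = ∫ x in (2 * c)..c, (1 - Phi (lam x)) * g x :=
      (intervalIntegral.integral_of_le h2c.le).symm
    have h2 : (∫ y in c..(0:ℝ), (1 - Phi (lam (2 * c - y))) * g (2 * c - y))
        = ∫ x in (2 * c - 0)..(2 * c - c), (1 - Phi (lam x)) * g x :=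
      intervalIntegral.integral_comp_sub_left (fun x => (1 - Phi (lam x)) * g x) (2 * c)
    rw [show (2:ℝ) * c - 0 = 2 * c by ring, show 2 * c - c = c by ring] at h2
    rw [h1, ← h2, intervalIntegral.integral_of_le hc.le]
    refine setIntegral_congr_fun measurableSet_Ioc fun y _ => ?_
    rw [hrefl y, Phi_neg]
    ring
  -- comparison on (c, 0]
  have hcomp : (∫ y in Set.Ioc c 0, Phi (lam y) * g y)
      ≤ ∫ y in Set.Ioc c 0, Phi (lam y) * g (2 * c - y) := by
    refine setIntegral_mono_on hG_int.integrableOn hGrefl_int.integrableOn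
      measurableSet_Ioc fun y hy => ?_
    refine mul_le_mul_of_nonneg_left ?_ (Phi_nonneg (lam y))
    rw [hg_def]
    unfold gaussianPDFReal
    refine mul_le_mul_of_nonneg_left (Real.exp_le_exp.mpr ?_) (by positivity)
    have hyc : c ≤ y := (hy.1).le
    have h4 : (2 * c - y - μ₁) ^ 2 ≤ (y - μ₁) ^ 2 := by nlinarith
    push_cast
    nlinarith
  calc (∫ x in Set.Ioc c 0, Phi (lam x) * g x)
      ≤ ∫ y in Set.Ioc c 0, Phi (lam y) * g (2 * c - y) := hcomp
    _ = ∫ x in Set.Ioc (2 * c) c, (1 - Phi (lam x)) * g x := hcov.symm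
    _ < (∫ x in Set.Iic (2 * c), (1 - Phi (lam x)) * g x)
        + ∫ x in Set.Ioc (2 * c) c, (1 - Phi (lam x)) * g x := by linarith
    _ = ∫ x in Set.Iic c, (1 - Phi (lam x)) * g x := hsplit.symm
end

section
/- Let Φ denote the standard normal CDF. Fix σ₁ ≥ σ₂ > 0, ρ ∈ (0,1), and c with 0 < c < c_ℓ := ρσ₂/(ρσ₂ + √(σ₁² + σ₂² + 2ρσ₁σ₂)). Then there exists M > 0 such that for all μ > M: Φ((1-c)μ/√(σ₁² + σ₂² + 2ρσ₁σ₂)) + Φ(μ/σ₁)·Φ(-cμ/σ₂) > Φ((1-c)μ/(σ₁+ρσ₂)) + Φ(-cμ/(ρσ₂)). -/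
open MeasureTheory ProbabilityTheory Filter

open Real Set Topology

namespace TrialBalloon

/-- The standard normal density. -/
noncomputable def pdf (t : ℝ) : ℝ := (Real.sqrt (2 * π))⁻¹ * Real.exp (-t ^ 2 / 2)

lemma pdf_eq (t : ℝ) : gaussianPDFReal 0 1 t = pdf t := by
  simp [gaussianPDFReal, pdf]

lemma pdf_nonneg (t : ℝ) : 0 ≤ pdf t :=
  mul_nonneg (inv_nonneg.2 (Real.sqrt_nonneg _)) (Real.exp_pos _).le

lemma integrable_pdf : Integrable pdf := by
  have := integrable_gaussianPDFReal 0 1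
  simpa [funext pdf_eq] using this

lemma Phi_eq (x : ℝ) : Phi x = ∫ t in Iic x, pdf t := by
  rw [Phi, cdf_eq_real, measureReal_def, gaussianReal_apply_eq_integral 0 one_ne_zero,
    ENNReal.toReal_ofReal]
  · exact setIntegral_congr_fun measurableSet_Iic fun t _ => pdf_eq t
  · exact setIntegral_nonneg measurableSet_Iic fun t _ => gaussianPDFReal_nonneg 0 1 t

lemma Phi_nonneg (x : ℝ) : 0 ≤ Phi x := cdf_nonneg _ x

lemma Phi_le_one (x : ℝ) : Phi x ≤ 1 := cdf_le_one _ x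

lemma Phi_mono : Monotone Phi := monotone_cdf _

lemma one_sub_Phi (x : ℝ) : 1 - Phi x = ∫ t in Ioi x, pdf t := by
  have h := integral_add_compl (s := Iic x) measurableSet_Iic integrable_pdf (μ := volume)
  rw [compl_Iic] at h
  have hint : ∫ t, pdf t = 1 := by
    have := integral_gaussianPDFReal_eq_one 0 one_ne_zero
    simpa [funext pdf_eq] using this
  rw [Phi_eq]
  linarith [h.trans hint]

/-- Lower bound for the left tail. -/
lemma Phi_neg_ge {x : ℝ} (hx : 0 ≤ x) :
    (Real.sqrt (2 * π))⁻¹ * Real.exp (-(x + 1) ^ 2 / 2) ≤ Phi (-x) := by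
  rw [Phi_eq]
  have h1 : ∫ t in Ioc (-x - 1) (-x), pdf t ≤ ∫ t in Iic (-x), pdf t := by
    refine setIntegral_mono_set integrable_pdf.integrableOn
      (Filter.Eventually.of_forall fun t => pdf_nonneg t) ?_
    exact HasSubset.Subset.eventuallyLE fun t ht => ht.2
  refine le_trans ?_ h1
  have h2 : (Real.sqrt (2 * π))⁻¹ * Real.exp (-(x + 1) ^ 2 / 2) *
      (volume (Ioc (-x - 1) (-x))).toReal ≤ ∫ t in Ioc (-x - 1) (-x), pdf t := by
    refine setIntegral_ge_of_const_le_real measurableSet_Ioc (by simp) ?_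
      integrable_pdf.integrableOn
    intro t ht
    unfold pdf
    have ht1 : -x - 1 < t := ht.1
    have ht2 : t ≤ -x := ht.2
    have : t ^ 2 ≤ (x + 1) ^ 2 := by nlinarith
    gcongr

  have hvol : (volume (Ioc (-x - 1) (-x))).toReal = 1 := by
    rw [Real.volume_Ioc]
    rw [ENNReal.toReal_ofReal (by linarith)]
    ring
  rw [hvol, mul_one] at h2
  exact h2

lemma hasDerivAt_aux (t : ℝ) :
    HasDerivAt (fun t : ℝ => (Real.sqrt (2 * π))⁻¹ * Real.exp (-t ^ 2 / 2))
      (-t * pdf t) t := by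
  have h1 : HasDerivAt (fun t : ℝ => -t ^ 2 / 2) (-t) t := by
    have := ((hasDerivAt_pow 2 t).neg).div_const 2
    simpa using this.congr_deriv (by ring)
  have h2 := (h1.exp).const_mul (Real.sqrt (2 * π))⁻¹
  refine h2.congr_deriv ?_
  unfold pdf; ring

lemma integrable_mul_pdf : Integrable fun t : ℝ => -t * pdf t := by
  have h := integrable_mul_exp_neg_mul_sq (b := 2⁻¹) (by norm_num)
  have h2 := (h.const_mul (-(Real.sqrt (2 * π))⁻¹))
  refine h2.congr (Filter.Eventually.of_forall fun t => ?_)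
  simp only [pdf]
  rw [show -(2⁻¹ : ℝ) * t ^ 2 = -t ^ 2 / 2 by ring]
  ring

lemma tendsto_exp_sq_atBot :
    Tendsto (fun t : ℝ => (Real.sqrt (2 * π))⁻¹ * Real.exp (-t ^ 2 / 2)) atBot (𝓝 0) := by
  rw [show (0 : ℝ) = (Real.sqrt (2 * π))⁻¹ * 0 by ring]
  refine Tendsto.const_mul _ ?_
  refine Real.tendsto_exp_atBot.comp ?_
  have h1 : Tendsto (fun t : ℝ => -t ^ 2 / 2) atTop atBot := by
    apply Tendsto.atBot_div_const (by norm_num)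
    exact tendsto_neg_atBot_iff.mpr (tendsto_pow_atTop (by norm_num))
  refine (h1.comp tendsto_neg_atBot_atTop).congr fun t => ?_
  simp [Function.comp, neg_sq]

lemma tendsto_exp_sq_atTop :
    Tendsto (fun t : ℝ => (Real.sqrt (2 * π))⁻¹ * Real.exp (-t ^ 2 / 2)) atTop (𝓝 0) := by
  rw [show (0 : ℝ) = (Real.sqrt (2 * π))⁻¹ * 0 by ring]
  refine Tendsto.const_mul _ ?_
  refine Real.tendsto_exp_atBot.comp ?_
  apply Tendsto.atBot_div_const (by norm_num)
  exact tendsto_neg_atBot_iff.mpr (tendsto_pow_atTop (by norm_num))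

/-- Upper bound for the left tail. -/
lemma Phi_neg_le {x : ℝ} (hx : 1 ≤ x) :
    Phi (-x) ≤ (Real.sqrt (2 * π))⁻¹ * Real.exp (-x ^ 2 / 2) := by
  rw [Phi_eq]
  have h1 : ∫ t in Iic (-x), pdf t ≤ ∫ t in Iic (-x), -t * pdf t := by
    refine setIntegral_mono_on integrable_pdf.integrableOn
      integrable_mul_pdf.integrableOn measurableSet_Iic ?_
    intro t ht
    have : 1 ≤ -t := by simp only [mem_Iic] at ht; linarith
    nlinarith [pdf_nonneg t]
  refine h1.trans_eq ?_
  have := integral_Iic_of_hasDerivAt_of_tendsto'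
    (f := fun t : ℝ => (Real.sqrt (2 * π))⁻¹ * Real.exp (-t ^ 2 / 2))
    (f' := fun t => -t * pdf t) (a := -x)
    (fun t _ => hasDerivAt_aux t) integrable_mul_pdf.integrableOn tendsto_exp_sq_atBot
  rw [this]
  simp [neg_pow]

/-- Upper bound for the right tail. -/
lemma one_sub_Phi_le {x : ℝ} (hx : 1 ≤ x) :
    1 - Phi x ≤ (Real.sqrt (2 * π))⁻¹ * Real.exp (-x ^ 2 / 2) := by
  rw [one_sub_Phi]
  have h1 : ∫ t in Ioi x, pdf t ≤ ∫ t in Ioi x, t * pdf t := by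
    refine setIntegral_mono_on integrable_pdf.integrableOn
      ((integrable_mul_pdf.neg.congr (Filter.Eventually.of_forall fun t => by
        simp only [Pi.neg_apply]; ring)).integrableOn)
      measurableSet_Ioi ?_
    intro t ht
    have : 1 ≤ t := by simp only [mem_Ioi] at ht; linarith
    nlinarith [pdf_nonneg t]
  refine h1.trans_eq ?_
  have := integral_Ioi_of_hasDerivAt_of_tendsto'
    (f := fun t : ℝ => -((Real.sqrt (2 * π))⁻¹ * Real.exp (-t ^ 2 / 2)))
    (f' := fun t => t * pdf t) (a := x)
    (fun t _ => ((hasDerivAt_aux t).neg.congr_deriv (by ring)))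
    ((integrable_mul_pdf.neg.congr (Filter.Eventually.of_forall fun t => by
      simp only [Pi.neg_apply]; ring)).integrableOn)
    (by simpa using tendsto_exp_sq_atTop.neg)
  rw [this]
  ring

end TrialBalloon

set_option maxHeartbeats 1000000 in
/-- Lemma 3 (bothVs1), first part: for `c < c_ℓ` and high precision, discovering only
the trial balloon beats (an upper bound on the payoff from) full discovery. -/
theorem trial_balloon_eventually_beats_full_discovery
    (σ₁ σ₂ ρ c : ℝ) (hσ₂ : 0 < σ₂) (hσ : σ₂ ≤ σ₁) (hρ : ρ ∈ Set.Ioo (0 : ℝ) 1)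
    (hc : c ∈ Set.Ioo (0 : ℝ)
      (ρ * σ₂ / (ρ * σ₂ + Real.sqrt (σ₁ ^ 2 + σ₂ ^ 2 + 2 * ρ * σ₁ * σ₂)))) :
    ∃ M : ℝ, 0 < M ∧ ∀ μ : ℝ, M < μ →
      Phi ((1 - c) * μ / Real.sqrt (σ₁ ^ 2 + σ₂ ^ 2 + 2 * ρ * σ₁ * σ₂))
          + Phi (μ / σ₁) * Phi (-c * μ / σ₂) >
        Phi ((1 - c) * μ / (σ₁ + ρ * σ₂)) + Phi (-c * μ / (ρ * σ₂)) := by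
  obtain ⟨hρ0, hρ1⟩ := hρ
  obtain ⟨hc0, hcu⟩ := hc
  have hσ₁ : 0 < σ₁ := lt_of_lt_of_le hσ₂ hσ
  set S := Real.sqrt (σ₁ ^ 2 + σ₂ ^ 2 + 2 * ρ * σ₁ * σ₂) with hS
  have hSsq : 0 < σ₁ ^ 2 + σ₂ ^ 2 + 2 * ρ * σ₁ * σ₂ := by positivity
  have hSpos : 0 < S := Real.sqrt_pos.mpr hSsq
  have hρσ : 0 < ρ * σ₂ := by positivity
  have hkey0 : c * (ρ * σ₂ + S) < ρ * σ₂ := (lt_div_iff₀ (by linarith)).mp hcu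
  have hkey : c * S < (1 - c) * (ρ * σ₂) := by nlinarith
  have hc1 : c < 1 := by nlinarith
  set a := c / σ₂ with ha'
  set b₂ := c / (ρ * σ₂) with hb₂'
  set b₁ := (1 - c) / S with hb₁'
  have ha : 0 < a := div_pos hc0 hσ₂
  have hb₂ : 0 < b₂ := div_pos hc0 hρσ
  have hab : a < b₂ := div_lt_div_of_pos_left hc0 hρσ (by nlinarith)
  have hb₁₂ : b₂ < b₁ := (div_lt_div_iff₀ hρσ hSpos).mpr hkey
  set d := b₂ ^ 2 - a ^ 2 with hd'
  have hdpos : 0 < d := by nlinarith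
  set K := (Real.sqrt (2 * Real.pi))⁻¹ with hK'
  have hK : 0 < K := by positivity
  have hK1 : K * Real.sqrt (2 * Real.pi) = 1 :=
    inv_mul_cancel₀ (ne_of_gt (by positivity))
  set L := 2 * Real.log (2 * Real.sqrt (2 * Real.pi)) with hL'
  have hsq1 : (1 : ℝ) ≤ Real.sqrt (2 * Real.pi) := by
    rw [show (1 : ℝ) = Real.sqrt 1 by simp]
    exact Real.sqrt_le_sqrt (by nlinarith [Real.pi_gt_three])
  have hLnn : 0 ≤ L := by
    have := Real.log_nonneg (by linarith : (1 : ℝ) ≤ 2 * Real.sqrt (2 * Real.pi))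
    linarith
  have hCpos : (0 : ℝ) < 2 * Real.sqrt (2 * Real.pi) := by positivity
  clear_value S a b₂ b₁ d K L
  refine ⟨max (max 1 (1 / b₂)) ((2 * a + 2 + L) / d),
    lt_of_lt_of_le one_pos ((le_max_left 1 _).trans (le_max_left _ _)), ?_⟩
  intro μ hμ
  have hμ1 : 1 < μ := lt_of_le_of_lt ((le_max_left 1 _).trans (le_max_left _ _)) hμ
  have hμpos : 0 < μ := by linarith
  have hb₂μ : 1 ≤ b₂ * μ := by
    have h := (div_lt_iff₀ hb₂).mp
      (lt_of_le_of_lt ((le_max_right 1 (1 / b₂)).trans (le_max_left _ _)) hμ)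
    linarith [h]
  have hb₁μ : 1 ≤ b₁ * μ := by nlinarith
  have hμd : 2 * a + 2 + L < μ * d := (div_lt_iff₀ hdpos).mp
    (lt_of_le_of_lt (le_max_right _ _) hμ)
  have haμ : 0 ≤ a * μ := by positivity
  -- rewrite the four Phi arguments
  have e1 : (1 - c) * μ / S = b₁ * μ := by rw [hb₁']; ring
  have e2 : -c * μ / σ₂ = -(a * μ) := by rw [ha']; ring
  have e3 : -c * μ / (ρ * σ₂) = -(b₂ * μ) := by rw [hb₂']; ring
  rw [e1, e2, e3]
  -- tail estimates
  have E1 : K * Real.exp (-1 / 2) ≤ Phi (μ / σ₁) := by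
    rw [hK']
    have h0 := TrialBalloon.Phi_neg_ge (le_refl (0 : ℝ))
    rw [neg_zero, show (-(0 + 1 : ℝ) ^ 2 / 2) = -1 / 2 by norm_num] at h0
    exact h0.trans (TrialBalloon.Phi_mono (by positivity))
  have E2 : K * Real.exp (-(a * μ + 1) ^ 2 / 2) ≤ Phi (-(a * μ)) :=
    by rw [hK']; exact TrialBalloon.Phi_neg_ge haμ
  have E3 : Phi (-(b₂ * μ)) ≤ K * Real.exp (-(b₂ * μ) ^ 2 / 2) :=
    by rw [hK']; exact TrialBalloon.Phi_neg_le hb₂μ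
  have E4 : 1 - Phi (b₁ * μ) ≤ K * Real.exp (-(b₁ * μ) ^ 2 / 2) :=
    by rw [hK']; exact TrialBalloon.one_sub_Phi_le hb₁μ
  have E5 : Real.exp (-(b₁ * μ) ^ 2 / 2) ≤ Real.exp (-(b₂ * μ) ^ 2 / 2) := by
    apply Real.exp_le_exp.mpr
    have h1 : b₂ * μ < b₁ * μ := mul_lt_mul_of_pos_right hb₁₂ hμpos
    have hsq : (b₂ * μ) ^ 2 ≤ (b₁ * μ) ^ 2 :=
      pow_le_pow_left₀ (by linarith) h1.le 2
    linarith
  have E4' : 1 - Phi (b₁ * μ) ≤ K * Real.exp (-(b₂ * μ) ^ 2 / 2) :=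
    E4.trans (mul_le_mul_of_nonneg_left E5 hK.le)
  have f1 : K * Real.exp (-1 / 2) * (K * Real.exp (-(a * μ + 1) ^ 2 / 2)) ≤
      Phi (μ / σ₁) * Phi (-(a * μ)) :=
    mul_le_mul E1 E2 (mul_nonneg hK.le (Real.exp_pos _).le) (TrialBalloon.Phi_nonneg _)
  have f2 : Phi ((1 - c) * μ / (σ₁ + ρ * σ₂)) ≤ 1 := TrialBalloon.Phi_le_one _
  -- the key exponential comparison
  have harith : L + 1 < (b₂ * μ) ^ 2 - (a * μ + 1) ^ 2 := by
    have h1 := mul_lt_mul_of_pos_left hμd hμpos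
    have h2 : L ≤ L * μ := le_mul_of_one_le_right hLnn hμ1.le
    have h3 : (b₂ * μ) ^ 2 - (a * μ + 1) ^ 2 = d * μ ^ 2 - 2 * (a * μ) - 1 := by
      rw [hd']; ring
    linarith [h1, h2, h3]
  have hexpC : Real.exp (L / 2) = 2 * Real.sqrt (2 * Real.pi) := by
    rw [hL', show 2 * Real.log (2 * Real.sqrt (2 * Real.pi)) / 2 =
      Real.log (2 * Real.sqrt (2 * Real.pi)) by ring]
    exact Real.exp_log hCpos
  have hexp : Real.exp (-(b₂ * μ) ^ 2 / 2) * (2 * Real.sqrt (2 * Real.pi)) <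
      Real.exp (-1 / 2) * Real.exp (-(a * μ + 1) ^ 2 / 2) := by
    rw [← hexpC, ← Real.exp_add, ← Real.exp_add]
    exact Real.exp_lt_exp.mpr (by linarith)
  have hfin : 2 * K * Real.exp (-(b₂ * μ) ^ 2 / 2) <
      K ^ 2 * (Real.exp (-1 / 2) * Real.exp (-(a * μ + 1) ^ 2 / 2)) := by
    have h := mul_lt_mul_of_pos_left hexp (pow_pos hK 2)
    have h2 : 2 * K * Real.exp (-(b₂ * μ) ^ 2 / 2) =
        K ^ 2 * (Real.exp (-(b₂ * μ) ^ 2 / 2) * (2 * Real.sqrt (2 * Real.pi))) := by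
      linear_combination (-(2 * K * Real.exp (-(b₂ * μ) ^ 2 / 2))) * hK1
    linarith
  linarith [E3, E4', f1, f2, hfin]
end

section
/- Let Φ denote the standard normal CDF. Let N be a finite nonempty set of projects, with means μ : N → ℝ and standard deviations σ : N → ℝ with σ(k) > 0 for all k, and fix ρ ∈ (0,1). Suppose ∑_{k ∈ N} μ(k) < 0. Then for any i, j ∈ N with σ(i) ≥ σ(j): Φ((∑_{k ∈ N} μ(k))/(σ(i) + ρ·∑_{k ∈ N, k ≠ i} σ(k))) ≥ Φ((∑_{k ∈ N} μ(k))/(σ(j) + ρ·∑_{k ∈ N, k ≠ j} σ(k))). That is, among single-project discovery rules, discovering a project of maximal variance maximizes the probability of obtaining the grand bundle. -/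
open MeasureTheory ProbabilityTheory Filter

/-- N-project extension of Proposition 2: among single-project discovery rules,
discovering a project of (weakly) larger standard deviation yields a (weakly) larger
probability of obtaining the grand bundle. -/
theorem n_project_bundle_prefers_high_variance
    {ι : Type*} [Fintype ι] [Nonempty ι] [DecidableEq ι]
    (μ σ : ι → ℝ) (hσ : ∀ k, 0 < σ k) (ρ : ℝ) (hρ : ρ ∈ Set.Ioo (0 : ℝ) 1)
    (hsum : ∑ k, μ k < 0) (i j : ι) (hij : σ j ≤ σ i) :
    Phi ((∑ k, μ k) / (σ i + ρ * ∑ k ∈ Finset.univ.erase i, σ k)) ≥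
      Phi ((∑ k, μ k) / (σ j + ρ * ∑ k ∈ Finset.univ.erase j, σ k)) := by
  obtain ⟨hρ0, hρ1⟩ := hρ
  have herase : ∀ k : ι, ∑ l ∈ Finset.univ.erase k, σ l = (∑ l, σ l) - σ k := by
    intro k
    rw [Finset.sum_erase_eq_sub (Finset.mem_univ k)]
  have hden : ∀ k : ι, σ k + ρ * ∑ l ∈ Finset.univ.erase k, σ l
      = ρ * (∑ l, σ l) + (1 - ρ) * σ k := by
    intro k; rw [herase]; ring
  have hSpos : 0 < ∑ l, σ l := Finset.sum_pos (fun l _ => hσ l) Finset.univ_nonempty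
  have hdpos : ∀ k : ι, 0 < ρ * (∑ l, σ l) + (1 - ρ) * σ k := fun k =>
    add_pos (mul_pos hρ0 hSpos) (mul_pos (by linarith) (hσ k))
  have hdle : ρ * (∑ l, σ l) + (1 - ρ) * σ j ≤ ρ * (∑ l, σ l) + (1 - ρ) * σ i := by
    have : (0:ℝ) ≤ 1 - ρ := by linarith
    nlinarith
  rw [hden i, hden j]
  apply monotone_cdf (gaussianReal 0 1)
  have h := div_le_div_of_nonneg_left (neg_nonneg.2 hsum.le) (hdpos j) hdle
  rw [neg_div, neg_div, neg_le_neg_iff] at h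
  exact h
end
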